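/- The cluster model is short-range entangled: let U be the diagonal unitary on H_m ⊗ H_g defined by U(e_a ⊗ f_b) := (−1)^{Σ_{j∈J} (Σ_{i∈A j} a(i))·b(j)} (e_a ⊗ f_b) (the circuit of controlled-Z gates along the edges of the bipartite graph). Then U is an involution and conjugates the trivial single-site Pauli-X operators to the cluster stabilizers: U (X(χ_i) ⊗ 1) U⁻¹ = K_i for every i ∈ I, and U (1 ⊗ X_g(κ_j)) U⁻¹ = L_j for every j ∈ J. -/

import Mathlib

set_option linter.unusedSectionVars false

noncomputable section

namespace GaugingFractal

/-- The sign `(-1)^t` attached to a `ZMod 2` exponent. -/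
def sgn (t : ZMod 2) : ℂ := (-1 : ℂ) ^ t.val

lemma sgn_mul_self (t : ZMod 2) : sgn t * sgn t = 1 := by
  unfold sgn
  rw [← pow_add, ← two_mul, pow_mul]
  norm_num

lemma zmodfun_add_self {K : Type*} (k : K → ZMod 2) : k + k = 0 := by
  funext j
  exact CharTwo.add_self_eq_zero _

/-- Hilbert space of qubits labelled by a finite set `K`; the computational basis
vector `e_a` is indexed by a pattern `a : K → ZMod 2`. -/
abbrev HS (K : Type*) := EuclideanSpace ℂ (K → ZMod 2)

section Single
variable {K : Type*} [Fintype K] [DecidableEq K]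

/-- Pauli X operator: `X(p) e_a = e_{a+p}`. -/
def XOp (p : K → ZMod 2) : HS K →ₗ[ℂ] HS K where
  toFun ψ := WithLp.toLp 2 (fun a => ψ (a + p))
  map_add' _ _ := rfl
  map_smul' _ _ := rfl

/-- Pauli Z operator: `Z(p) e_a = (-1)^{Σ_i p i * a i} e_a`. -/
def ZOp (p : K → ZMod 2) : HS K →ₗ[ℂ] HS K where
  toFun ψ := WithLp.toLp 2 (fun a => sgn (∑ i, p i * a i) * ψ a)
  map_add' ψ φ := by
    apply WithLp.ofLp_injective
    funext a
    exact mul_add _ _ _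
  map_smul' c ψ := by
    apply WithLp.ofLp_injective
    funext a
    simp only [RingHom.id_apply, PiLp.smul_apply, smul_eq_mul]
    ring

end Single

section Pair

variable {I J : Type*} [Fintype I] [DecidableEq I] [Fintype J] [DecidableEq J]

/-- Hilbert space of the matter qubits (labelled by `I`) tensored with the gauge
qubits (labelled by `J`): the computational basis vector indexed by `(a, b)`
realizes the tensor product `e_a ⊗ f_b`. -/
abbrev HS2 (I J : Type*) := EuclideanSpace ℂ ((I → ZMod 2) × (J → ZMod 2))

/-- `X(p) ⊗ X_g(q)` on `H_m ⊗ H_g`. -/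
def XXOp (p : I → ZMod 2) (q : J → ZMod 2) : HS2 I J →ₗ[ℂ] HS2 I J where
  toFun ψ := WithLp.toLp 2 (fun ab => ψ (ab.1 + p, ab.2 + q))
  map_add' _ _ := rfl
  map_smul' _ _ := rfl

/-- `X(p) ⊗ Z_g(q)` on `H_m ⊗ H_g`. -/
def XZOp (p : I → ZMod 2) (q : J → ZMod 2) : HS2 I J →ₗ[ℂ] HS2 I J where
  toFun ψ := WithLp.toLp 2 (fun ab => sgn (∑ j, q j * ab.2 j) * ψ (ab.1 + p, ab.2))
  map_add' ψ φ := by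
    apply WithLp.ofLp_injective
    funext ab
    exact mul_add _ _ _
  map_smul' c ψ := by
    apply WithLp.ofLp_injective
    funext ab
    simp only [RingHom.id_apply, PiLp.smul_apply, smul_eq_mul]
    ring

/-- `Z(p) ⊗ X_g(q)` on `H_m ⊗ H_g`. -/
def ZXOp (p : I → ZMod 2) (q : J → ZMod 2) : HS2 I J →ₗ[ℂ] HS2 I J where
  toFun ψ := WithLp.toLp 2 (fun ab => sgn (∑ i, p i * ab.1 i) * ψ (ab.1, ab.2 + q))
  map_add' ψ φ := by
    apply WithLp.ofLp_injective
    funext ab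
    exact mul_add _ _ _
  map_smul' c ψ := by
    apply WithLp.ofLp_injective
    funext ab
    simp only [RingHom.id_apply, PiLp.smul_apply, smul_eq_mul]
    ring

/-- The flux operator `1 ⊗ Z_g(k)` on `H_m ⊗ H_g`. -/
def IZOp (k : J → ZMod 2) : HS2 I J →ₗ[ℂ] HS2 I J := XZOp 0 k

variable (A : J → Finset I)

/-- The boundary map `∂ : (I → ZMod 2) → (J → ZMod 2)`, `(∂p)(j) = Σ_{i ∈ A j} p(i)`. -/
def bnd (p : I → ZMod 2) : J → ZMod 2 := fun j => ∑ i ∈ A j, p i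

/-- The coboundary map `δ : (J → ZMod 2) → (I → ZMod 2)`, `(δk)(i) = Σ_{j : i ∈ A j} k(j)`. -/
def cobnd (k : J → ZMod 2) : I → ZMod 2 :=
  fun i => ∑ j ∈ Finset.univ.filter (fun j => i ∈ A j), k j

/-- The indicator pattern `χ_i` of a matter qubit `i`. -/
def chi (i : I) : I → ZMod 2 := Pi.single i 1

/-- The indicator pattern `κ_j` of a gauge qubit `j`. -/
def kap (j : J) : J → ZMod 2 := Pi.single j 1

/-- The local gauge constraint `C_i = X(χ_i) ⊗ X_g(∂χ_i)`. -/
def C (i : I) : HS2 I J →ₗ[ℂ] HS2 I J := XXOp (chi i) (bnd A (chi i))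

lemma XXOp_mul (p p' : I → ZMod 2) (q q' : J → ZMod 2) :
    (XXOp p q : Module.End ℂ (HS2 I J)) * XXOp p' q' = XXOp (p + p') (q + q') := by
  apply LinearMap.ext
  intro ψ
  apply WithLp.ofLp_injective
  funext ab
  show ψ (ab.1 + p + p', ab.2 + q + q') = ψ (ab.1 + (p + p'), ab.2 + (q + q'))
  rw [add_assoc, add_assoc]

lemma C_commute (i i' : I) : Commute (C A i) (C A i') := by
  show C A i * C A i' = C A i' * C A i
  unfold C
  rw [XXOp_mul, XXOp_mul, add_comm (chi i) (chi i'),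
    add_comm (bnd A (chi i)) (bnd A (chi i'))]

/-- The product of gauge constraints `C^s = Π_{i : s i = 1} C_i`. -/
def Cprod (s : I → ZMod 2) : Module.End ℂ (HS2 I J) :=
  (Finset.univ.filter fun i => s i = 1).noncommProd (fun i => C A i)
    (fun i _ j _ _ => C_commute A i j)

lemma Chalf_commute (i i' : I) :
    Commute ((2 : ℂ)⁻¹ • (1 + C A i)) ((2 : ℂ)⁻¹ • (1 + C A i')) := by
  have h : Commute (1 + C A i) (1 + C A i') :=
    (Commute.one_left _).add_left ((Commute.one_right _).add_right (C_commute A i i'))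
  exact (h.smul_left _).smul_right _

/-- The projector `P = Π_{i ∈ I} (1 + C_i)/2` onto the gauge invariant subspace. -/
def Pproj : Module.End ℂ (HS2 I J) :=
  Finset.univ.noncommProd (fun i => (2 : ℂ)⁻¹ • (1 + C A i))
    (fun i _ j _ _ => Chalf_commute A i j)

/-- `ψ ↦ ψ ⊗ f_0`, the inclusion `1_m ⊗ |f_0⟩ : H_m → H_m ⊗ H_g` determined by the
all-zeros gauge basis vector `f_0`. -/
def incl : HS I →ₗ[ℂ] HS2 I J where
  toFun ψ := WithLp.toLp 2 (fun ab => if ab.2 = 0 then ψ ab.1 else 0)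
  map_add' ψ φ := by
    apply WithLp.ofLp_injective
    funext ab
    by_cases h : ab.2 = 0 <;> simp [h]
  map_smul' c ψ := by
    apply WithLp.ofLp_injective
    funext ab
    by_cases h : ab.2 = 0 <;> simp [h]

/-- The compression `1_m ⊗ ⟨f_0| : H_m ⊗ H_g → H_m`. -/
def res0 : HS2 I J →ₗ[ℂ] HS I where
  toFun ψ := WithLp.toLp 2 (fun a => ψ (a, 0))
  map_add' _ _ := rfl
  map_smul' _ _ := rfl

/-- The state gauging map `G ψ = P (ψ ⊗ f_0)`. -/
def Gmap : HS I →ₗ[ℂ] HS2 I J := Pproj A ∘ₗ incl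

/-- The operator gauging map `𝒢[O] = Σ_{s : I → ZMod 2} C^s (O ⊗ |f_0⟩⟨f_0|) C^s`,
where `O ⊗ |f_0⟩⟨f_0| = incl ∘ O ∘ res0`. -/
def gaugeOp (O : Module.End ℂ (HS I)) : Module.End ℂ (HS2 I J) :=
  ∑ s : I → ZMod 2, Cprod A s * (incl ∘ₗ O ∘ₗ res0) * Cprod A s

/-- The joint fixed subspace `{v | C_i v = v for all i}` of the gauge constraints. -/
def fixedSub : Submodule ℂ (HS2 I J) where
  carrier := {v | ∀ i, C A i v = v}
  add_mem' := by
    intro x y hx hy i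
    rw [map_add, hx i, hy i]
  zero_mem' := by
    intro i
    simp
  smul_mem' := by
    intro c x hx i
    rw [map_smul, hx i]

/-- The symmetric subspace `{ψ | X(s) ψ = ψ for all s with ∂s = 0}` of the matter space. -/
def symmSub : Submodule ℂ (HS I) where
  carrier := {ψ | ∀ s, bnd A s = 0 → XOp s ψ = ψ}
  add_mem' := by
    intro x y hx hy s hs
    rw [map_add, hx s hs, hy s hs]
  zero_mem' := by
    intro s hs
    simp
  smul_mem' := by
    intro c x hx s hs
    rw [map_smul, hx s hs]

/-- The cluster stabilizer `K_i = X(χ_i) ⊗ Z_g(∂χ_i)`. -/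
def Kst (i : I) : Module.End ℂ (HS2 I J) := XZOp (chi i) (bnd A (chi i))

/-- The cluster stabilizer `L_j = Z(δκ_j) ⊗ X_g(κ_j)`. -/
def Lst (j : J) : Module.End ℂ (HS2 I J) := ZXOp (cobnd A (kap j)) (kap j)

/-- The disentangling circuit of controlled-X gates from each matter qubit to its
adjacent gauge qubits: `V (e_a ⊗ f_b) = e_a ⊗ f_{b + ∂a}`. -/
def Vequiv : HS2 I J ≃ₗ[ℂ] HS2 I J where
  toFun ψ := WithLp.toLp 2 (fun ab => ψ (ab.1, ab.2 + bnd A ab.1))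
  invFun ψ := WithLp.toLp 2 (fun ab => ψ (ab.1, ab.2 + bnd A ab.1))
  map_add' _ _ := rfl
  map_smul' _ _ := rfl
  left_inv ψ := by
    apply WithLp.ofLp_injective
    funext ab
    show ψ (ab.1, ab.2 + bnd A ab.1 + bnd A ab.1) = ψ ab
    rw [add_assoc, zmodfun_add_self, add_zero]
  right_inv ψ := by
    apply WithLp.ofLp_injective
    funext ab
    show ψ (ab.1, ab.2 + bnd A ab.1 + bnd A ab.1) = ψ ab
    rw [add_assoc, zmodfun_add_self, add_zero]

/-- The circuit of controlled-Z gates along the edges of the bipartite graph: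
`U (e_a ⊗ f_b) = (-1)^{Σ_j (∂a)(j)·b(j)} e_a ⊗ f_b`. -/
def Uequiv : HS2 I J ≃ₗ[ℂ] HS2 I J where
  toFun ψ := WithLp.toLp 2 (fun ab => sgn (∑ j, bnd A ab.1 j * ab.2 j) * ψ ab)
  invFun ψ := WithLp.toLp 2 (fun ab => sgn (∑ j, bnd A ab.1 j * ab.2 j) * ψ ab)
  map_add' ψ φ := by
    apply WithLp.ofLp_injective
    funext ab
    exact mul_add _ _ _
  map_smul' c ψ := by
    apply WithLp.ofLp_injective
    funext ab
    simp only [RingHom.id_apply, PiLp.smul_apply, smul_eq_mul]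
    ring
  left_inv ψ := by
    apply WithLp.ofLp_injective
    funext ab
    show sgn _ * (sgn _ * ψ ab) = ψ ab
    rw [← mul_assoc, sgn_mul_self, one_mul]
  right_inv ψ := by
    apply WithLp.ofLp_injective
    funext ab
    show sgn _ * (sgn _ * ψ ab) = ψ ab
    rw [← mul_assoc, sgn_mul_self, one_mul]

/-!
The circuit `U` is diagonal with phase `(-1)^β(a,b)`, where `β(a,b) = ∂a ⬝ᵥ b` is bilinear, so
its phases square to one and `U` is its own inverse. Conjugating the shift `X(p) ⊗ X_g(q)` by `U`
multiplies it by `(-1)^(β(a,b) + β(a+p,b+q)) = (-1)^(β(p,b) + β(a,q) + β(p,q))`, the terms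
`β(a,b)` cancelling in characteristic two. For `q = 0` this phase is that of `Z_g(∂p)`; for `p = 0`
it is `(-1)^(∂a ⬝ᵥ q) = (-1)^(δq ⬝ᵥ a)`, that of `Z(δq)`, because `δ` is the transpose of `∂`.
-/

open Matrix

lemma sgn_add (s t : ZMod 2) : sgn (s + t) = sgn s * sgn t := by
  unfold sgn
  rw [← pow_add, ZMod.val_add, ← Nat.mod_add_div (s.val + t.val) 2, pow_add, pow_mul]
  simp

lemma bnd_add (a p : I → ZMod 2) : bnd A (a + p) = bnd A a + bnd A p := by
  funext j
  exact Finset.sum_add_distrib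

lemma bnd_zero : bnd A (0 : I → ZMod 2) = (0 : J → ZMod 2) := by
  funext j
  exact Finset.sum_const_zero

lemma cobnd_dotProduct (k : J → ZMod 2) (a : I → ZMod 2) :
    cobnd A k ⬝ᵥ a = bnd A a ⬝ᵥ k := by
  simp only [dotProduct, cobnd, bnd, Finset.sum_mul, Finset.sum_filter]
  rw [Finset.sum_comm]
  refine Finset.sum_congr rfl fun j _ => ?_
  simp only [ite_mul, zero_mul]
  rw [← Finset.sum_filter, Finset.filter_mem_eq_inter, Finset.univ_inter]
  exact Finset.sum_congr rfl fun i _ => mul_comm _ _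

lemma Uequiv_apply (ψ : HS2 I J) (ab : (I → ZMod 2) × (J → ZMod 2)) :
    Uequiv A ψ ab = sgn (bnd A ab.1 ⬝ᵥ ab.2) * ψ ab :=
  rfl

lemma Uequiv_symm : (Uequiv A).symm = Uequiv A :=
  rfl

lemma Uequiv_mul_self : (Uequiv A).toLinearMap * (Uequiv A).toLinearMap = 1 :=
  LinearMap.ext fun ψ => (Uequiv A).apply_symm_apply ψ

lemma Uequiv_conj_XXOp_apply (p : I → ZMod 2) (q : J → ZMod 2) (ψ : HS2 I J)
    (ab : (I → ZMod 2) × (J → ZMod 2)) :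
    (Uequiv A).conj (XXOp p q) ψ ab
      = sgn (bnd A p ⬝ᵥ ab.2 + bnd A ab.1 ⬝ᵥ q + bnd A p ⬝ᵥ q) * ψ (ab.1 + p, ab.2 + q) := by
  rw [LinearEquiv.conj_apply_apply, Uequiv_symm, Uequiv_apply]
  show _ * (sgn (bnd A (ab.1 + p) ⬝ᵥ (ab.2 + q)) * _) = _
  rw [← mul_assoc, ← sgn_add, bnd_add, add_dotProduct, dotProduct_add, dotProduct_add]
  congr 2
  ring_nf
  reduce_mod_char

lemma Uequiv_conj_XXOp_zero_right (p : I → ZMod 2) :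
    (Uequiv A).conj (XXOp p 0) = XZOp p (bnd A p) := by
  refine LinearMap.ext fun ψ => PiLp.ext fun ab => ?_
  rw [Uequiv_conj_XXOp_apply, dotProduct_zero, dotProduct_zero, add_zero, add_zero, add_zero]
  rfl

lemma Uequiv_conj_XXOp_zero_left (q : J → ZMod 2) :
    (Uequiv A).conj (XXOp 0 q) = ZXOp (cobnd A q) q := by
  refine LinearMap.ext fun ψ => PiLp.ext fun ab => ?_
  rw [Uequiv_conj_XXOp_apply, bnd_zero, zero_dotProduct, zero_dotProduct, zero_add, add_zero,
    add_zero, ← cobnd_dotProduct]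
  rfl

/-- The cluster model is short-range entangled: the controlled-Z circuit
`U (e_a ⊗ f_b) = (−1)^{Σ_j (∂a)(j)·b(j)} e_a ⊗ f_b` is an involution and conjugates the
trivial single-site Pauli-X operators to the cluster stabilizers:
`U (X(χ_i) ⊗ 1) U⁻¹ = K_i` and `U (1 ⊗ X_g(κ_j)) U⁻¹ = L_j`. -/
theorem cluster_model_SRE (A : J → Finset I) :
    ((Uequiv A).toLinearMap * (Uequiv A).toLinearMap = 1)
    ∧ (∀ i : I, (Uequiv A).conj (XXOp (chi i) (0 : J → ZMod 2)) = Kst A i)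
    ∧ (∀ j : J, (Uequiv A).conj (XXOp (0 : I → ZMod 2) (kap j)) = Lst A j) :=
  ⟨Uequiv_mul_self A, fun i => Uequiv_conj_XXOp_zero_right A (chi i),
    fun j => Uequiv_conj_XXOp_zero_left A (kap j)⟩

end Pair

end GaugingFractal
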